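/- Let ⟨A,∧,↣,0⟩ be a Brignole algebra and define x→y:=x↣(x↣y) and ∼x:=x↣0. Then for all x,y in A the original implication is recovered: (x→y)∧(∼y→∼x) = x↣y. -/

import Mathlib

/-- A Brignole algebra ⟨A,∧,↣,0⟩ of type (2,2,0), with the abbreviations
∼x := x↣0 and x∨y := ((x↣0)∧(y↣0))↣0 written out in the axioms. -/
structure BrignoleAlgebra (A : Type*) where
  meet : A → A → A
  himp : A → A → A
  zero : A
  b1 : ∀ x y, himp (himp x x) y = y
  b2 : ∀ x y, meet (himp x y) y = y
  b3 : ∀ x y, meet x (himp (meet x (himp y zero)) zero) = meet x (himp x y)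
  b4 : ∀ x y z, himp x (meet y z) = meet (himp x y) (himp x z)
  b5 : ∀ x y, himp x y = himp (himp y zero) (himp x zero)
  b6 : ∀ x y z, himp x (himp x (himp y (himp y z))) =
    himp (meet x y) (himp (meet x y) z)
  b7 : ∀ x y, himp (himp (meet (himp x zero) y) zero) (himp x y) = himp x y
  b8 : ∀ x y, meet x (himp (meet (himp x zero) (himp y zero)) zero) = x
  b9 : ∀ x y z, meet x (himp (meet (himp y zero) (himp z zero)) zero) =
    himp (meet (himp (meet z x) zero) (himp (meet y x) zero)) zero
  b10 : ∀ x y, meet (meet x (himp x zero))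
      (himp (meet (himp y zero) (himp (himp y zero) zero)) zero) =
    meet x (himp x zero)

/-- The negation ∼x := x↣0. -/
def BrignoleAlgebra.neg {A : Type*} (B : BrignoleAlgebra A) (x : A) : A :=
  B.himp x B.zero

/-- The join x∨y := ((x↣0)∧(y↣0))↣0. -/
def BrignoleAlgebra.join {A : Type*} (B : BrignoleAlgebra A) (x y : A) : A :=
  B.himp (B.meet (B.himp x B.zero) (B.himp y B.zero)) B.zero

/-- The strong implication x→y := x↣(x↣y). -/
def BrignoleAlgebra.imp {A : Type*} (B : BrignoleAlgebra A) (x y : A) : A :=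
  B.himp x (B.himp x y)

/-- The unit 1 := 0↣0. -/
def BrignoleAlgebra.one {A : Type*} (B : BrignoleAlgebra A) : A :=
  B.himp B.zero B.zero

/-!
Double negation `∼∼y = y` follows from (B1) and (B5), so (B5) becomes the exchange law
`∼a ↣ b = ∼b ↣ a`. Applying it to the left-hand side of (B7) and distributing with (B4) turns
(B7) into `(x ↣ (x ↣ y)) ∧ (∼y ↣ (x ↣ y)) = x ↣ y`; by (B5) the second factor is `∼y → ∼x`.
-/

namespace BrignoleAlgebra

variable {A : Type*} (B : BrignoleAlgebra A)

lemma himp_eq_neg_himp_neg (x y : A) : B.himp x y = B.himp (B.neg y) (B.neg x) :=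
  B.b5 x y

lemma neg_neg (y : A) : B.neg (B.neg y) = y := by
  have h := B.himp_eq_neg_himp_neg (B.himp y y) y
  have neg_himp_self : B.neg (B.himp y y) = B.zero := B.b1 y B.zero
  rw [B.b1, neg_himp_self] at h
  exact h.symm

lemma neg_himp_comm (x y : A) : B.himp (B.neg x) y = B.himp (B.neg y) x := by
  rw [B.himp_eq_neg_himp_neg (B.neg x) y, neg_neg]

lemma imp_neg_neg (x y : A) : B.imp (B.neg y) (B.neg x) = B.himp (B.neg y) (B.himp x y) := by
  rw [imp, ← himp_eq_neg_himp_neg]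

lemma imp_meet_neg_himp_himp (x y : A) :
    B.meet (B.imp x y) (B.himp (B.neg y) (B.himp x y)) = B.himp x y := by
  have h : B.himp (B.neg (B.meet (B.neg x) y)) (B.himp x y) = B.himp x y := B.b7 x y
  rwa [neg_himp_comm, B.b4, ← himp_eq_neg_himp_neg, B.neg_himp_comm (B.himp x y) y] at h

end BrignoleAlgebra

theorem brignole_recover_himp {A : Type*} (B : BrignoleAlgebra A) (x y : A) :
    B.meet (B.imp x y) (B.imp (B.neg y) (B.neg x)) = B.himp x y := by
  rw [B.imp_neg_neg]
  exact B.imp_meet_neg_himp_himp x y
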